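/- Let $(X_n)$ be a symmetric nearest-neighbor random walk on $\mathbb{Z}^d$ started at $0$ with kernel $p$, $p(e_i)=p(-e_i)$, exiting the ball $V_L$ at time $\tau_L$, and let $\pi_L^{(p)}(0,y)=P_0(X_{\tau_L}=y)$. Then for each $i=1,\ldots,d$: $p(e_i) = \tfrac12 \sum_{y\in\partial V_L} \pi_L^{(p)}(0,y)\,(y_i/L)^2 + O(L^{-1})$. -/

import Mathlib

open MeasureTheory Finset
open scoped Classical

noncomputable section

/-- The standard unit vector `e i` in `ℤ^d`. -/
def unitVec {d : ℕ} (i : Fin d) : Fin d → ℤ := fun j => if j = i then 1 else 0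

/-- Euclidean norm of a lattice point. -/
def znorm {d : ℕ} (x : Fin d → ℤ) : ℝ := Real.sqrt (∑ i, ((x i : ℝ))^2)

/-- One step of the symmetric nearest-neighbor walk with kernel `p`
(`p i` is the probability of a step `+e_i`, and also of `-e_i`). -/
def stepOp {d : ℕ} (p : Fin d → ℝ) (f : (Fin d → ℤ) → ℝ) : (Fin d → ℤ) → ℝ :=
  fun x => ∑ i, p i * (f (x + unitVec i) + f (x - unitVec i))

/-- One step of the walk absorbed on the set `A`. -/
def stopOp {d : ℕ} (p : Fin d → ℝ) (A : Set (Fin d → ℤ)) (f : (Fin d → ℤ) → ℝ) :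
    (Fin d → ℤ) → ℝ :=
  fun x => if x ∈ A then f x else stepOp p f x

/-- `exitProb p L x z` is the probability that the walk with kernel `p` started at `x`
exits the ball `V_L = {y : |y| ≤ L}` precisely at `z` (i.e. `X_{τ_L} = z`). -/
def exitProb {d : ℕ} (p : Fin d → ℝ) (L : ℝ) (x z : Fin d → ℤ) : ℝ :=
  ⨆ n : ℕ, (stopOp p {y | L < znorm y})^[n]
    (fun y => if L < znorm y ∧ y = z then (1:ℝ) else 0) x

namespace Stmt1Aux
variable {d : ℕ}

def phi (x : Fin d → ℤ) : ℝ := ∑ i, ((x i : ℝ))^2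

lemma phi_nonneg (x : Fin d → ℤ) : 0 ≤ phi x := Finset.sum_nonneg fun _ _ => sq_nonneg _

lemma sq_le_phi (x : Fin d → ℤ) (i : Fin d) : ((x i : ℝ))^2 ≤ phi x :=
  Finset.single_le_sum (fun j _ => sq_nonneg ((x j : ℝ))) (Finset.mem_univ i)

lemma lt_znorm_iff {L : ℝ} (hL : 0 ≤ L) (x : Fin d → ℤ) : L < znorm x ↔ L^2 < phi x := by
  rw [znorm, show L = Real.sqrt (L^2) by rw [Real.sqrt_sq hL]]
  rw [Real.sqrt_lt_sqrt_iff (sq_nonneg L)]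
  simp [phi, Real.sq_sqrt (sq_nonneg L), Real.sqrt_sq hL]

lemma abs_le_of_phi {L : ℝ} (hL : 0 ≤ L) {x : Fin d → ℤ} (h : phi x ≤ L^2) (i : Fin d) :
    |((x i : ℝ))| ≤ L := by
  have h1 : ((x i:ℝ))^2 ≤ L^2 := (sq_le_phi x i).trans h
  calc |((x i:ℝ))| = Real.sqrt (((x i:ℝ))^2) := (Real.sqrt_sq_eq_abs _).symm
    _ ≤ Real.sqrt (L^2) := Real.sqrt_le_sqrt h1
    _ = L := Real.sqrt_sq hL

lemma phi_add (x : Fin d → ℤ) (i : Fin d) :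
    phi (x + unitVec i) = phi x + 2*(x i : ℝ) + 1 := by
  unfold phi
  have : ∀ j, (((x + unitVec i) j : ℝ))^2
      = ((x j:ℝ))^2 + (if j = i then 2*(x i:ℝ)+1 else 0) := by
    intro j
    by_cases h : j = i
    · subst h; simp [unitVec]; push_cast; ring
    · simp [unitVec, h]
  rw [Finset.sum_congr rfl fun j _ => this j, Finset.sum_add_distrib,
    Finset.sum_ite_eq' Finset.univ i (fun _ => 2*(x i:ℝ)+1)]
  simp [add_assoc]

lemma phi_sub (x : Fin d → ℤ) (i : Fin d) :
    phi (x - unitVec i) = phi x - 2*(x i : ℝ) + 1 := by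
  unfold phi
  have : ∀ j, (((x - unitVec i) j : ℝ))^2
      = ((x j:ℝ))^2 + (if j = i then -(2*(x i:ℝ))+1 else 0) := by
    intro j
    by_cases h : j = i
    · subst h; simp [unitVec]; push_cast; ring
    · simp [unitVec, h]
  rw [Finset.sum_congr rfl fun j _ => this j, Finset.sum_add_distrib,
    Finset.sum_ite_eq' Finset.univ i (fun _ => -(2*(x i:ℝ))+1)]
  simp only [Finset.mem_univ, if_true]
  ring

def TT {d : ℕ} (p : Fin d → ℝ) (L : ℝ) : ((Fin d → ℤ) → ℝ) → (Fin d → ℤ) → ℝ :=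
  stopOp p {y | L < znorm y}

lemma TT_def {d : ℕ} (p : Fin d → ℝ) (L : ℝ) (f x) :
    TT p L f x = if L < znorm x then f x else stepOp p f x := rfl

variable {d : ℕ} (p : Fin d → ℝ) (L : ℝ)



lemma stopOp_of_mem (f : (Fin d → ℤ) → ℝ) {x} (h : L < znorm x) : TT p L f x = f x := if_pos h

lemma stopOp_of_not_mem (f : (Fin d → ℤ) → ℝ) {x} (h : ¬ L < znorm x) :
    TT p L f x = stepOp p f x := if_neg h

lemma iter_of_mem (f : (Fin d → ℤ) → ℝ) (n : ℕ) {x} (h : L < znorm x) :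
    (TT p L)^[n] f x = f x := by
  induction n with
  | zero => rfl
  | succ n ih => rw [Function.iterate_succ_apply', stopOp_of_mem p L _ h, ih]

lemma iter_mono (hp : ∀ i, 0 ≤ p i) {f g : (Fin d → ℤ) → ℝ} (h : ∀ y, f y ≤ g y) :
    ∀ n x, (TT p L)^[n] f x ≤ (TT p L)^[n] g x := by
  intro n
  induction n with
  | zero => exact h
  | succ n ih =>
    intro x
    rw [Function.iterate_succ_apply', Function.iterate_succ_apply']
    unfold TT stopOp
    by_cases hx : x ∈ {y : Fin d → ℤ | L < znorm y}
    · simp only [hx, if_true]; exact ih x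
    · simp only [hx, if_false]
      unfold stepOp
      exact Finset.sum_le_sum fun i _ =>
        mul_le_mul_of_nonneg_left (add_le_add (ih _) (ih _)) (hp i)

lemma iter_add (f g : (Fin d → ℤ) → ℝ) :
    ∀ n, (TT p L)^[n] (fun y => f y + g y) = fun x => (TT p L)^[n] f x + (TT p L)^[n] g x := by
  intro n
  induction n with
  | zero => rfl
  | succ n ih =>
    funext x
    rw [Function.iterate_succ_apply', Function.iterate_succ_apply',
      Function.iterate_succ_apply', ih]
    unfold TT stopOp stepOp
    by_cases hx : x ∈ {y : Fin d → ℤ | L < znorm y}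
    · simp only [hx, if_true]
    · simp only [hx, if_false]
      rw [← Finset.sum_add_distrib]
      exact Finset.sum_congr rfl fun i _ => by ring

lemma iter_smul (c : ℝ) (f : (Fin d → ℤ) → ℝ) :
    ∀ n, (TT p L)^[n] (fun y => c * f y) = fun x => c * (TT p L)^[n] f x := by
  intro n
  induction n with
  | zero => rfl
  | succ n ih =>
    funext x
    rw [Function.iterate_succ_apply', Function.iterate_succ_apply', ih]
    unfold TT stopOp stepOp
    by_cases hx : x ∈ {y : Fin d → ℤ | L < znorm y}
    · simp only [hx, if_true]
    · simp only [hx, if_false]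
      rw [Finset.mul_sum]
      exact Finset.sum_congr rfl fun i _ => by ring

lemma iter_zero : ∀ n x, (TT p L)^[n] (fun _ => (0:ℝ)) x = 0 := by
  intro n
  induction n with
  | zero => intro x; rfl
  | succ n ih =>
    intro x
    rw [Function.iterate_succ_apply']
    have : (TT p L)^[n] (fun _ => (0:ℝ)) = fun _ => (0:ℝ) := funext ih
    rw [this]
    unfold TT stopOp stepOp
    by_cases hx : x ∈ {y : Fin d → ℤ | L < znorm y} <;> simp [hx]

lemma iter_nonneg (hp : ∀ i, 0 ≤ p i) {f : (Fin d → ℤ) → ℝ} (h : ∀ y, 0 ≤ f y) :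
    ∀ n x, 0 ≤ (TT p L)^[n] f x := by
  intro n x
  have := iter_mono p L hp (f := fun _ => (0:ℝ)) (g := f) h n x
  rwa [iter_zero p L n x] at this

lemma iter_const (hsum : ∑ i, 2 * p i = 1) (c : ℝ) :
    ∀ n x, (TT p L)^[n] (fun _ => c) x = c := by
  intro n
  induction n with
  | zero => intro x; rfl
  | succ n ih =>
    intro x
    rw [Function.iterate_succ_apply']
    have : (TT p L)^[n] (fun _ => c) = fun _ => c := funext ih
    rw [this]
    unfold TT stopOp stepOp
    by_cases hx : x ∈ {y : Fin d → ℤ | L < znorm y}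
    · simp [hx]
    · simp only [hx, if_false]
      have : ∑ i, p i * (c + c) = (∑ i, 2 * p i) * c := by
        rw [Finset.sum_mul]; exact Finset.sum_congr rfl fun i _ => by ring
      rw [this, hsum, one_mul]

lemma iter_le_const (hp : ∀ i, 0 ≤ p i) (hsum : ∑ i, 2 * p i = 1)
    {f : (Fin d → ℤ) → ℝ} {c : ℝ} (h : ∀ y, f y ≤ c) :
    ∀ n x, (TT p L)^[n] f x ≤ c := by
  intro n x
  have := iter_mono p L hp (g := fun _ => c) h n x
  rwa [iter_const p L hsum c n x] at this

lemma iter_mono_n (hp : ∀ i, 0 ≤ p i) {f : (Fin d → ℤ) → ℝ}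
    (h : ∀ x, f x ≤ TT p L f x) : ∀ n x, (TT p L)^[n] f x ≤ (TT p L)^[n+1] f x := by
  intro n
  induction n with
  | zero => exact h
  | succ n ih =>
    intro x
    rw [Function.iterate_succ_apply', Function.iterate_succ_apply']
    unfold TT stopOp
    by_cases hx : x ∈ {y : Fin d → ℤ | L < znorm y}
    · simp only [hx, if_true]; exact ih x
    · simp only [hx, if_false]
      unfold stepOp
      exact Finset.sum_le_sum fun i _ =>
        mul_le_mul_of_nonneg_left (add_le_add (ih _) (ih _)) (hp i)


section Martingale
variable {d : ℕ} (p : Fin d → ℝ) (L : ℝ)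

def Phi (L : ℝ) (x : Fin d → ℤ) : ℝ := min (phi x) ((L+1)^2)
def Psi (L : ℝ) (i : Fin d) (x : Fin d → ℤ) : ℝ := min (((x i : ℝ))^2) ((L+1)^2)
def ind (L : ℝ) (x : Fin d → ℤ) : ℝ := if L < znorm x then 0 else 1

lemma ind_nonneg (x : Fin d → ℤ) : 0 ≤ ind L x := by
  unfold ind; split <;> norm_num

lemma Phi_nonneg (hL : 0 ≤ L) (x : Fin d → ℤ) : 0 ≤ Phi L x :=
  le_min (phi_nonneg x) (sq_nonneg _)

lemma Psi_nonneg (hL : 0 ≤ L) (i : Fin d) (x : Fin d → ℤ) : 0 ≤ Psi L i x :=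
  le_min (sq_nonneg _) (sq_nonneg _)

lemma phi_neighbor_le (hL : 0 ≤ L) {x : Fin d → ℤ} (hx : phi x ≤ L^2) (j : Fin d) :
    phi (x + unitVec j) ≤ (L+1)^2 ∧ phi (x - unitVec j) ≤ (L+1)^2 := by
  have habs : |((x j : ℝ))| ≤ L := abs_le_of_phi hL hx j
  have h1 : 2*(x j : ℝ) ≤ 2*L := by nlinarith [le_abs_self ((x j:ℝ))]
  have h2 : -(2*L) ≤ 2*(x j : ℝ) := by nlinarith [neg_abs_le ((x j:ℝ))]
  constructor
  · rw [phi_add]; nlinarith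
  · rw [phi_sub]; nlinarith

lemma not_mem_phi_le {x : Fin d → ℤ} (hL : 0 ≤ L) (hx : ¬ L < znorm x) : phi x ≤ L^2 := by
  rw [lt_znorm_iff hL] at hx; linarith [not_lt.mp hx]

lemma stop_Phi (hp : ∀ i, 0 ≤ p i) (hsum : ∑ i, 2 * p i = 1) (hL : 0 ≤ L) (x : Fin d → ℤ) :
    TT p L (Phi L) x = Phi L x + ind L x := by
  rw [TT_def]
  by_cases hx : L < znorm x
  · simp [hx, ind]
  · simp only [hx, if_false, ind, if_neg hx]
    have hφ : phi x ≤ L^2 := not_mem_phi_le L hL hx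
    unfold stepOp
    have hterm : ∀ j : Fin d, p j * (Phi L (x + unitVec j) + Phi L (x - unitVec j))
        = 2 * p j * (phi x + 1) := by
      intro j
      have hnb := phi_neighbor_le L hL hφ j
      unfold Phi
      rw [min_eq_left hnb.1, min_eq_left hnb.2, phi_add, phi_sub]
      ring
    rw [Finset.sum_congr rfl fun j _ => hterm j]
    have : ∑ j : Fin d, 2 * p j * (phi x + 1) = (∑ j : Fin d, 2 * p j) * (phi x + 1) :=
      (Finset.sum_mul _ _ _).symm
    rw [this, hsum, one_mul]
    have hΦ : Phi L x = phi x := min_eq_left (by nlinarith)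
    rw [hΦ]

lemma unit_apply (x : Fin d → ℤ) (i j : Fin d) :
    (((x + unitVec j) i : ℝ)) = (x i : ℝ) + (if i = j then 1 else 0)
      ∧ (((x - unitVec j) i : ℝ)) = (x i : ℝ) - (if i = j then 1 else 0) := by
  unfold unitVec
  constructor <;> (simp only [Pi.add_apply, Pi.sub_apply] <;> split <;> push_cast <;> ring)

lemma stop_Psi (hp : ∀ i, 0 ≤ p i) (hsum : ∑ i, 2 * p i = 1) (hL : 0 ≤ L) (i : Fin d)
    (x : Fin d → ℤ) :
    TT p L (Psi L i) x = Psi L i x + 2 * p i * ind L x := by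
  rw [TT_def]
  by_cases hx : L < znorm x
  · simp [hx, ind]
  · simp only [hx, if_false, ind, if_neg hx]
    have hφ : phi x ≤ L^2 := not_mem_phi_le L hL hx
    have hxi : ((x i:ℝ))^2 ≤ L^2 := (sq_le_phi x i).trans hφ
    unfold stepOp
    have hterm : ∀ j : Fin d, p j * (Psi L i (x + unitVec j) + Psi L i (x - unitVec j))
        = 2 * p j * ((x i:ℝ))^2 + (if j = i then 2 * p j else 0) := by
      intro j
      have hnb := phi_neighbor_le L hL hφ j
      have e1 : Psi L i (x + unitVec j) = (((x + unitVec j) i : ℝ))^2 :=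
        min_eq_left ((sq_le_phi _ i).trans hnb.1)
      have e2 : Psi L i (x - unitVec j) = (((x - unitVec j) i : ℝ))^2 :=
        min_eq_left ((sq_le_phi _ i).trans hnb.2)
      rw [e1, e2, (unit_apply x i j).1, (unit_apply x i j).2]
      by_cases h : i = j
      · subst h; simp; ring
      · have h' : ¬ j = i := fun hc => h hc.symm
        simp [h, h']; ring
    rw [Finset.sum_congr rfl fun j _ => hterm j, Finset.sum_add_distrib]
    have e3 : ∑ j : Fin d, 2 * p j * ((x i:ℝ))^2 = (∑ j : Fin d, 2 * p j) * ((x i:ℝ))^2 :=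
      (Finset.sum_mul _ _ _).symm
    rw [e3, hsum, one_mul, Finset.sum_ite_eq' Finset.univ i (fun j => 2 * p j)]
    have hΨ : Psi L i x = ((x i:ℝ))^2 := min_eq_left (by nlinarith)
    rw [hΨ]
    simp

lemma stop_sum {β : Type*} (F : Finset β) (g : β → (Fin d → ℤ) → ℝ) (x : Fin d → ℤ) :
    TT p L (fun y => ∑ z ∈ F, g z y) x = ∑ z ∈ F, TT p L (g z) x := by
  rw [TT_def]
  by_cases hx : L < znorm x
  · simp only [hx, if_true]
    exact Finset.sum_congr rfl fun z _ => (stopOp_of_mem p L (g z) hx).symm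
  · simp only [hx, if_false]
    unfold stepOp
    have hj : ∀ j : Fin d, p j * ((∑ z ∈ F, g z (x + unitVec j)) + (∑ z ∈ F, g z (x - unitVec j)))
        = ∑ z ∈ F, p j * (g z (x + unitVec j) + g z (x - unitVec j)) := by
      intro j; rw [← Finset.sum_add_distrib, Finset.mul_sum]
    rw [Finset.sum_congr rfl fun j _ => hj j, Finset.sum_comm]
    exact Finset.sum_congr rfl fun z _ => by rw [stopOp_of_not_mem p L (g z) hx]; rfl

lemma stop_add_pt (f g : (Fin d → ℤ) → ℝ) (x : Fin d → ℤ) :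
    TT p L (fun y => f y + g y) x = TT p L f x + TT p L g x := by
  have := iter_add p L f g 1
  simp only [Function.iterate_one] at this
  rw [this]

lemma iter_Phi (hp : ∀ i, 0 ≤ p i) (hsum : ∑ i, 2 * p i = 1) (hL : 0 ≤ L) :
    ∀ n, (TT p L)^[n] (Phi L)
      = fun x => Phi L x + ∑ k ∈ Finset.range n, (TT p L)^[k] (ind L) x := by
  intro n
  induction n with
  | zero => simp
  | succ n ih =>
    funext x
    rw [Function.iterate_succ_apply', ih]
    rw [stop_add_pt p L (Phi L) (fun y => ∑ k ∈ Finset.range n, (TT p L)^[k] (ind L) y) x]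
    rw [stop_Phi p L hp hsum hL x]
    have hswap : TT p L (fun y => ∑ k ∈ Finset.range n, (TT p L)^[k] (ind L) y) x
        = ∑ k ∈ Finset.range n, (TT p L)^[k+1] (ind L) x := by
      rw [stop_sum p L (Finset.range n) (fun k => (TT p L)^[k] (ind L)) x]
      exact Finset.sum_congr rfl fun k _ => congrFun
        (Function.iterate_succ_apply' (TT p L) k (ind L)).symm x
    rw [hswap, Finset.sum_range_succ' (fun k => (TT p L)^[k] (ind L) x) n]
    simp [Function.iterate_zero_apply]
    ring

lemma stop_smul_pt (c : ℝ) (f : (Fin d → ℤ) → ℝ) (x : Fin d → ℤ) :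
    TT p L (fun y => c * f y) x = c * TT p L f x := by
  have := iter_smul p L c f 1
  simp only [Function.iterate_one] at this
  rw [this]

lemma iter_Psi (hp : ∀ i, 0 ≤ p i) (hsum : ∑ i, 2 * p i = 1) (hL : 0 ≤ L) (i : Fin d) :
    ∀ n, (TT p L)^[n] (Psi L i)
      = fun x => Psi L i x + 2 * p i * ∑ k ∈ Finset.range n, (TT p L)^[k] (ind L) x := by
  intro n
  induction n with
  | zero => simp
  | succ n ih =>
    funext x
    rw [Function.iterate_succ_apply', ih]
    rw [show (fun x => Psi L i x + 2 * p i * ∑ k ∈ Finset.range n, (TT p L)^[k] (ind L) x)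
      = fun x => Psi L i x + (fun y => 2 * p i * ∑ k ∈ Finset.range n, (TT p L)^[k] (ind L) y) x
      from rfl]
    rw [stop_add_pt p L (Psi L i)
      (fun y => 2 * p i * ∑ k ∈ Finset.range n, (TT p L)^[k] (ind L) y) x]
    rw [stop_Psi p L hp hsum hL i x]
    rw [stop_smul_pt p L (2 * p i) (fun y => ∑ k ∈ Finset.range n, (TT p L)^[k] (ind L) y) x]
    have hswap : TT p L (fun y => ∑ k ∈ Finset.range n, (TT p L)^[k] (ind L) y) x
        = ∑ k ∈ Finset.range n, (TT p L)^[k+1] (ind L) x := by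
      rw [stop_sum p L (Finset.range n) (fun k => (TT p L)^[k] (ind L)) x]
      exact Finset.sum_congr rfl fun k _ => congrFun
        (Function.iterate_succ_apply' (TT p L) k (ind L)).symm x
    rw [hswap, Finset.sum_range_succ' (fun k => (TT p L)^[k] (ind L) x) n]
    simp [Function.iterate_zero_apply]
    ring

end Martingale

section Limits
variable {d : ℕ} (p : Fin d → ℝ) (L : ℝ)

def SS (n : ℕ) : ℝ := ∑ k ∈ Finset.range n, (TT p L)^[k] (ind L) 0
def II (n : ℕ) : ℝ := (TT p L)^[n] (ind L) 0
def slim : ℝ := ⨆ n, SS p L n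

lemma phi_zero : phi (0 : Fin d → ℤ) = 0 := by simp [phi]

lemma Phi_zero (hL : 0 ≤ L) : Phi L (0 : Fin d → ℤ) = 0 := by
  rw [Phi, phi_zero, min_eq_left (sq_nonneg _)]

lemma Psi_zero (hL : 0 ≤ L) (i : Fin d) : Psi L i (0 : Fin d → ℤ) = 0 := by
  rw [Psi]
  simp only [Pi.zero_apply, Int.cast_zero]
  rw [min_eq_left (by nlinarith [sq_nonneg (L+1)] : (0:ℝ)^2 ≤ (L+1)^2)]
  norm_num

lemma SS_eq_iterPhi (hp : ∀ i, 0 ≤ p i) (hsum : ∑ i, 2 * p i = 1) (hL : 0 ≤ L) (n : ℕ) :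
    (TT p L)^[n] (Phi L) 0 = SS p L n := by
  rw [iter_Phi p L hp hsum hL n]
  simp [Phi_zero L hL, SS]

lemma Psi_eq_iter (hp : ∀ i, 0 ≤ p i) (hsum : ∑ i, 2 * p i = 1) (hL : 0 ≤ L) (i : Fin d)
    (n : ℕ) : (TT p L)^[n] (Psi L i) 0 = 2 * p i * SS p L n := by
  rw [iter_Psi p L hp hsum hL i n]
  simp [Psi_zero L hL, SS]

lemma II_nonneg (hp : ∀ i, 0 ≤ p i) (n : ℕ) : 0 ≤ II p L n :=
  iter_nonneg p L hp (fun y => ind_nonneg L y) n 0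

lemma II_le_one (hp : ∀ i, 0 ≤ p i) (hsum : ∑ i, 2 * p i = 1) (n : ℕ) : II p L n ≤ 1 :=
  iter_le_const p L hp hsum (fun y => by unfold ind; split <;> norm_num) n 0

lemma SS_mono (hp : ∀ i, 0 ≤ p i) : Monotone (SS p L) := by
  apply monotone_nat_of_le_succ
  intro n
  rw [SS, SS, Finset.sum_range_succ]
  have := II_nonneg p L hp n
  rw [II] at this
  linarith

lemma SS_le (hp : ∀ i, 0 ≤ p i) (hsum : ∑ i, 2 * p i = 1) (hL : 0 ≤ L) (n : ℕ) :
    SS p L n ≤ (L+1)^2 := by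
  rw [← SS_eq_iterPhi p L hp hsum hL n]
  exact iter_le_const p L hp hsum (fun y => min_le_right _ _) n 0

lemma SS_tendsto (hp : ∀ i, 0 ≤ p i) (hsum : ∑ i, 2 * p i = 1) (hL : 0 ≤ L) :
    Filter.Tendsto (SS p L) Filter.atTop (nhds (slim p L)) :=
  tendsto_atTop_ciSup (SS_mono p L hp) ⟨(L+1)^2, by
    rintro x ⟨n, rfl⟩; exact SS_le p L hp hsum hL n⟩

lemma II_tendsto (hp : ∀ i, 0 ≤ p i) (hsum : ∑ i, 2 * p i = 1) (hL : 0 ≤ L) :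
    Filter.Tendsto (II p L) Filter.atTop (nhds 0) := by
  have h1 : Filter.Tendsto (fun n => SS p L (n+1)) Filter.atTop (nhds (slim p L)) :=
    (SS_tendsto p L hp hsum hL).comp (Filter.tendsto_add_atTop_nat 1)
  have h2 := Filter.Tendsto.sub h1 (SS_tendsto p L hp hsum hL)
  rw [sub_self] at h2
  convert h2 using 2 with n
  rw [SS, SS, Finset.sum_range_succ, II]
  ring

lemma SS_lower (hp : ∀ i, 0 ≤ p i) (hsum : ∑ i, 2 * p i = 1) (hL : 0 ≤ L) (n : ℕ) :
    L^2 - L^2 * II p L n ≤ SS p L n := by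
  have hg : ∀ y : Fin d → ℤ, L^2 + (-(L^2)) * ind L y ≤ Phi L y := by
    intro y
    by_cases hy : L < znorm y
    · simp only [ind, hy, if_true]
      have h1 : L^2 < phi y := (lt_znorm_iff hL y).mp hy
      have h2 : L^2 ≤ (L+1)^2 := by nlinarith
      calc L ^ 2 + -L ^ 2 * 0 = L^2 := by ring
        _ ≤ Phi L y := le_min h1.le h2
    · simp only [ind, hy, if_false]
      have := Phi_nonneg L hL y
      simpa using this
  have hm := iter_mono p L hp hg n 0
  rw [SS_eq_iterPhi p L hp hsum hL n] at hm
  have hadd := congrFun (iter_add p L (fun _ => L^2) (fun y => (-(L^2)) * ind L y) n) 0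
  rw [iter_const p L hsum (L^2) n 0] at hadd
  have hsmul := congrFun (iter_smul p L (-(L^2)) (ind L) n) 0
  -- combine
  have : (TT p L)^[n] (fun y => L^2 + (-(L^2)) * ind L y) 0
      = L^2 + (-(L^2)) * II p L n := by
    rw [hadd, hsmul, II]
  rw [this] at hm
  linarith

lemma slim_ge (hp : ∀ i, 0 ≤ p i) (hsum : ∑ i, 2 * p i = 1) (hL : 0 ≤ L) :
    L^2 ≤ slim p L := by
  have h1 : Filter.Tendsto (fun n => L^2 - L^2 * II p L n) Filter.atTop (nhds (L^2)) := by
    have := ((II_tendsto p L hp hsum hL).const_mul (L^2)).const_sub (L^2)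
    simpa using this
  exact le_of_tendsto_of_tendsto' h1 (SS_tendsto p L hp hsum hL)
    (fun n => SS_lower p L hp hsum hL n)

lemma slim_le (hp : ∀ i, 0 ≤ p i) (hsum : ∑ i, 2 * p i = 1) (hL : 0 ≤ L) :
    slim p L ≤ (L+1)^2 :=
  ciSup_le fun n => SS_le p L hp hsum hL n

end Limits

section Exit
variable {d : ℕ} (p : Fin d → ℝ) (L : ℝ)

def delta (L : ℝ) (z : Fin d → ℤ) : (Fin d → ℤ) → ℝ :=
  fun y => if L < znorm y ∧ y = z then 1 else 0

lemma exitProb_eq (x z : Fin d → ℤ) :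
    exitProb p L x z = ⨆ n : ℕ, (TT p L)^[n] (delta L z) x := rfl

lemma delta_nonneg (z y : Fin d → ℤ) : 0 ≤ delta L z y := by
  unfold delta; split <;> norm_num

lemma delta_le_one (z y : Fin d → ℤ) : delta L z y ≤ 1 := by
  unfold delta; split <;> norm_num

lemma delta_le_stop (hp : ∀ i, 0 ≤ p i) (z : Fin d → ℤ) :
    ∀ x, delta L z x ≤ TT p L (delta L z) x := by
  intro x
  rw [TT_def]
  by_cases hx : L < znorm x
  · simp [hx]
  · simp only [hx, if_false]
    have h0 : delta L z x = 0 := by simp [delta, hx]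
    rw [h0]
    apply Finset.sum_nonneg
    intro j _
    exact mul_nonneg (hp j) (add_nonneg (delta_nonneg L z _) (delta_nonneg L z _))

lemma iter_delta_mono (hp : ∀ i, 0 ≤ p i) (z x : Fin d → ℤ) :
    Monotone (fun n => (TT p L)^[n] (delta L z) x) :=
  monotone_nat_of_le_succ fun n => iter_mono_n p L hp (delta_le_stop p L hp z) n x

lemma iter_delta_le_one (hp : ∀ i, 0 ≤ p i) (hsum : ∑ i, 2 * p i = 1) (z x : Fin d → ℤ)
    (n : ℕ) : (TT p L)^[n] (delta L z) x ≤ 1 :=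
  iter_le_const p L hp hsum (delta_le_one L z) n x

lemma exitProb_tendsto (hp : ∀ i, 0 ≤ p i) (hsum : ∑ i, 2 * p i = 1) (z x : Fin d → ℤ) :
    Filter.Tendsto (fun n => (TT p L)^[n] (delta L z) x) Filter.atTop
      (nhds (exitProb p L x z)) := by
  rw [exitProb_eq]
  exact tendsto_atTop_ciSup (iter_delta_mono p L hp z x)
    ⟨1, by rintro r ⟨n, rfl⟩; exact iter_delta_le_one p L hp hsum z x n⟩

lemma neighbor_abs (x : Fin d → ℤ) (j k : Fin d) :
    |(((x + unitVec j) k : ℝ))| ≤ |(x k : ℝ)| + 1 ∧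
      |(((x - unitVec j) k : ℝ))| ≤ |(x k : ℝ)| + 1 := by
  rw [(unit_apply x k j).1, (unit_apply x k j).2]
  constructor
  · calc |((x k:ℝ)) + (if k = j then 1 else 0)| ≤ |((x k:ℝ))| + |((if k = j then (1:ℝ) else 0))| :=
        abs_add_le _ _
      _ ≤ |(x k:ℝ)| + 1 := by gcongr; split <;> norm_num
  · calc |((x k:ℝ)) - (if k = j then 1 else 0)| ≤ |((x k:ℝ))| + |((if k = j then (1:ℝ) else 0))| :=
        abs_sub _ _
      _ ≤ |(x k:ℝ)| + 1 := by gcongr; split <;> norm_num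

lemma znorm_zero_le (hL : 0 ≤ L) : ¬ L < znorm (0 : Fin d → ℤ) := by
  simp only [znorm, not_lt]
  convert hL using 1
  · rfl
  · simp [Real.sqrt_eq_zero']

lemma iter_delta_far (hp : ∀ i, 0 ≤ p i) (hL : 0 ≤ L) {z : Fin d → ℤ} {j : Fin d}
    (hz : L + 1 < |(z j : ℝ)|) :
    ∀ n, ∀ x : Fin d → ℤ, ¬ L < znorm x → (TT p L)^[n] (delta L z) x = 0 := by
  intro n
  induction n with
  | zero =>
    intro x hx
    simp [delta, hx]
  | succ n ih =>
    intro x hx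
    rw [Function.iterate_succ_apply', stopOp_of_not_mem p L _ hx]
    have hφx : phi x ≤ L^2 := not_mem_phi_le L hL hx
    have hxj : |(x j : ℝ)| ≤ L := abs_le_of_phi hL hφx j
    have hnb : ∀ y : Fin d → ℤ, |(y j : ℝ)| ≤ L + 1 → (TT p L)^[n] (delta L z) y = 0 := by
      intro y hyj
      by_cases hy : L < znorm y
      · rw [iter_of_mem p L _ n hy]
        have hne : y ≠ z := by
          intro hyz; rw [hyz] at hyj; linarith
        simp [delta, hne]
      · exact ih y hy
    unfold stepOp
    apply Finset.sum_eq_zero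
    intro k _
    rw [hnb _ ((neighbor_abs x k j).1.trans (by linarith)),
      hnb _ ((neighbor_abs x k j).2.trans (by linarith))]
    ring

lemma exitProb_far (hp : ∀ i, 0 ≤ p i) (hL : 0 ≤ L) {z : Fin d → ℤ} {j : Fin d}
    (hz : L + 1 < |(z j : ℝ)|) : exitProb p L 0 z = 0 := by
  rw [exitProb_eq]
  have : ∀ n, (TT p L)^[n] (delta L z) 0 = 0 := fun n =>
    iter_delta_far p L hp hL hz n 0 (znorm_zero_le L hL)
  simp only [this]
  exact ciSup_const

lemma iter_sum {β : Type*} (F : Finset β) (g : β → (Fin d → ℤ) → ℝ) :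
    ∀ n, (TT p L)^[n] (fun y => ∑ z ∈ F, g z y) = fun x => ∑ z ∈ F, (TT p L)^[n] (g z) x := by
  intro n
  induction n with
  | zero => rfl
  | succ n ih =>
    funext x
    rw [Function.iterate_succ_apply', ih, stop_sum p L F (fun z => (TT p L)^[n] (g z)) x]
    exact Finset.sum_congr rfl fun z _ => congrFun
      (Function.iterate_succ_apply' (TT p L) n (g z)).symm x

end Exit

section GR
variable {d : ℕ} (p : Fin d → ℝ) (L : ℝ)

def GG (L : ℝ) (i : Fin d) (M : ℤ) : (Fin d → ℤ) → ℝ :=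
  fun y => if L < znorm y ∧ ∀ k, |y k| ≤ M then Psi L i y else 0

def RR (L : ℝ) (i : Fin d) (M : ℤ) : (Fin d → ℤ) → ℝ :=
  fun y => Psi L i y - GG L i M y

lemma GG_sum_eq (i : Fin d) (M : ℤ) (y : Fin d → ℤ) :
    ∑ z ∈ Fintype.piFinset (fun _ : Fin d => Finset.Icc (-M) M), Psi L i z * delta L z y
      = GG L i M y := by
  by_cases hy : L < znorm y
  · have hterm : ∀ z, Psi L i z * delta L z y = if z = y then Psi L i z else 0 := by
      intro z
      unfold delta
      by_cases hz : z = y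
      · subst hz; simp [hy]
      · have : ¬ y = z := fun h => hz h.symm
        simp [this, hz]
    rw [Finset.sum_congr rfl fun z _ => hterm z, Finset.sum_ite_eq' _ y (fun z => Psi L i z)]
    unfold GG
    simp only [hy, true_and]
    congr 1
    · rw [eq_iff_iff]
      rw [Fintype.mem_piFinset]
      exact forall_congr' fun k => by rw [Finset.mem_Icc, ← abs_le]
  · have hterm : ∀ z, Psi L i z * delta L z y = 0 := by
      intro z; unfold delta; simp [hy]
    rw [Finset.sum_congr rfl fun z _ => hterm z, Finset.sum_const_zero]
    unfold GG
    simp [hy]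

lemma RR_nonneg (hL : 0 ≤ L) (i : Fin d) (M : ℤ) (y : Fin d → ℤ) : 0 ≤ RR L i M y := by
  unfold RR GG
  split
  · simp
  · simpa using Psi_nonneg L hL i y

lemma RR_boundary (hL : 0 ≤ L) (i : Fin d) {M : ℤ} (hM : L + 1 ≤ (M:ℝ)) {y : Fin d → ℤ}
    (hy : L < znorm y) (hk : ∀ k, |(y k : ℝ)| ≤ L + 1) : RR L i M y = 0 := by
  unfold RR GG
  have hmem : ∀ k, |y k| ≤ M := by
    intro k
    have : ((|y k| : ℤ) : ℝ) ≤ (M : ℝ) := by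
      rw [Int.cast_abs]; exact (hk k).trans hM
    exact_mod_cast this
  rw [if_pos ⟨hy, hmem⟩]
  ring

lemma RR_inside (hL : 0 ≤ L) (i : Fin d) (M : ℤ) {x : Fin d → ℤ} (hx : ¬ L < znorm x) :
    RR L i M x ≤ L^2 := by
  unfold RR GG
  rw [if_neg (fun h => hx h.1), sub_zero]
  calc Psi L i x ≤ ((x i : ℝ))^2 := min_le_left _ _
    _ ≤ phi x := sq_le_phi x i
    _ ≤ L^2 := not_mem_phi_le L hL hx

lemma iter_RR_bound (hp : ∀ i, 0 ≤ p i) (hL : 0 ≤ L) (i : Fin d) {M : ℤ}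
    (hM : L + 1 ≤ (M:ℝ)) :
    ∀ n, ∀ x : Fin d → ℤ, ¬ L < znorm x →
      (TT p L)^[n] (RR L i M) x ≤ L^2 * (TT p L)^[n] (ind L) x := by
  intro n
  induction n with
  | zero =>
    intro x hx
    simp only [Function.iterate_zero_apply]
    rw [ind, if_neg hx, mul_one]
    exact RR_inside L hL i M hx
  | succ n ih =>
    intro x hx
    rw [Function.iterate_succ_apply', Function.iterate_succ_apply',
      stopOp_of_not_mem p L _ hx, stopOp_of_not_mem p L _ hx]
    have hφx : phi x ≤ L^2 := not_mem_phi_le L hL hx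
    have hnb : ∀ y : Fin d → ℤ, (∀ k, |(y k : ℝ)| ≤ L + 1) →
        (TT p L)^[n] (RR L i M) y ≤ L^2 * (TT p L)^[n] (ind L) y := by
      intro y hyk
      by_cases hy : L < znorm y
      · rw [iter_of_mem p L _ n hy, iter_of_mem p L _ n hy,
          RR_boundary L hL i hM hy hyk, ind, if_pos hy]
        ring_nf
        exact le_refl 0
      · exact ih y hy
    unfold stepOp
    rw [Finset.mul_sum]
    apply Finset.sum_le_sum
    intro k _
    have h1 := hnb (x + unitVec k) (fun k' =>
      ((neighbor_abs x k k').1.trans (by linarith [abs_le_of_phi hL hφx k'])))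
    have h2 := hnb (x - unitVec k) (fun k' =>
      ((neighbor_abs x k k').2.trans (by linarith [abs_le_of_phi hL hφx k'])))
    calc p k * ((TT p L)^[n] (RR L i M) (x + unitVec k) + (TT p L)^[n] (RR L i M) (x - unitVec k))
        ≤ p k * (L^2 * (TT p L)^[n] (ind L) (x + unitVec k)
            + L^2 * (TT p L)^[n] (ind L) (x - unitVec k)) :=
          mul_le_mul_of_nonneg_left (add_le_add h1 h2) (hp k)
      _ = L^2 * (p k * ((TT p L)^[n] (ind L) (x + unitVec k)
            + (TT p L)^[n] (ind L) (x - unitVec k))) := by ring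

end GR

end Stmt1Aux

open Stmt1Aux Filter Topology

/-- for a symmetric nearest-neighbor walk with kernel `p` started at `0`,
`p(e_i) = (1/2) ∑_{y} π_L^{(p)}(0,y) (y_i/L)² + O(L^{-1})`, where `π_L^{(p)}(0,·)` is the
exit distribution from the ball `V_L` (supported on the outer boundary `∂V_L`), and the
implied constant depends only on `d`. -/
theorem stmt1 (d : ℕ) (hd : 1 ≤ d) :
    ∃ C > 0, ∀ L : ℝ, 1 ≤ L → ∀ p : Fin d → ℝ,
      (∀ i, 0 ≤ p i) → (∑ i, 2 * p i = 1) →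
      ∀ i : Fin d,
        |p i - (1/2) * ∑' z : Fin d → ℤ, exitProb p L 0 z * ((z i : ℝ) / L)^2| ≤ C / L := by
  refine ⟨2, by norm_num, ?_⟩
  intro L hL p hp hsum i
  have hL0 : (0:ℝ) ≤ L := by linarith
  have hLpos : (0:ℝ) < L := by linarith
  have hL2 : (0:ℝ) < L^2 := by positivity
  set M : ℤ := ⌈L⌉ + 1 with hM_def
  have hM : L + 1 ≤ (M : ℝ) := by
    have h := Int.le_ceil L
    rw [hM_def]
    push_cast
    linarith
  set F := Fintype.piFinset (fun _ : Fin d => Finset.Icc (-M) M) with hF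
  have htsum : ∑' z : Fin d → ℤ, exitProb p L 0 z * ((z i : ℝ)/L)^2
      = ∑ z ∈ F, exitProb p L 0 z * ((z i : ℝ)/L)^2 := by
    apply tsum_eq_sum
    intro z hz
    rw [hF, Fintype.mem_piFinset] at hz
    push_neg at hz
    obtain ⟨j, hj⟩ := hz
    rw [Finset.mem_Icc] at hj
    have hint : M < |z j| := by
      rcases abs_cases (z j) with ⟨h1, _⟩ | ⟨h1, _⟩ <;> omega
    have hfar : L + 1 < |((z j : ℤ) : ℝ)| := by
      have : (M:ℝ) < |((z j : ℤ) : ℝ)| := by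
        rw [← Int.cast_abs]
        exact_mod_cast hint
      linarith
    rw [exitProb_far p L hp hL0 hfar, zero_mul]
  set a : ℕ → ℝ := fun n => ∑ z ∈ F, (TT p L)^[n] (delta L z) 0 * ((z i:ℝ)/L)^2 with ha
  have h_tend_a : Tendsto a atTop (𝓝 (∑ z ∈ F, exitProb p L 0 z * ((z i:ℝ)/L)^2)) := by
    apply tendsto_finset_sum
    intro z _
    exact (exitProb_tendsto p L hp hsum z 0).mul_const _
  have h_an : ∀ n, a n = (1/L^2) * (2 * p i * SS p L n - (TT p L)^[n] (RR L i M) 0) := by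
    intro n
    have h1 : a n = ∑ z ∈ F, Psi L i z * (TT p L)^[n] (delta L z) 0 * (1/L^2) := by
      rw [ha]
      apply Finset.sum_congr rfl
      intro z _
      by_cases h0 : (TT p L)^[n] (delta L z) 0 = 0
      · rw [h0]; ring
      · have hnear : ∀ j, ¬ (L + 1 < |((z j : ℤ) : ℝ)|) := by
          intro j hcon
          exact h0 (iter_delta_far p L hp hL0 hcon n 0 (znorm_zero_le L hL0))
        have hzi : ((z i : ℝ))^2 ≤ (L+1)^2 := by
          have := not_lt.mp (hnear i)
          nlinarith [abs_nonneg ((z i : ℝ)), le_abs_self ((z i:ℝ)), neg_abs_le ((z i:ℝ))]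
        have hPsi : Psi L i z = ((z i:ℝ))^2 := min_eq_left hzi
        rw [hPsi, div_pow]
        field_simp
    have h2 : ∑ z ∈ F, Psi L i z * (TT p L)^[n] (delta L z) 0
        = (TT p L)^[n] (GG L i M) 0 := by
      have hs := congrFun (iter_sum p L F (fun z => fun y => Psi L i z * delta L z y) n) 0
      have hsm : ∀ z, (TT p L)^[n] (fun y => Psi L i z * delta L z y) 0
          = Psi L i z * (TT p L)^[n] (delta L z) 0 :=
        fun z => congrFun (iter_smul p L (Psi L i z) (delta L z) n) 0
      calc ∑ z ∈ F, Psi L i z * (TT p L)^[n] (delta L z) 0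
          = ∑ z ∈ F, (TT p L)^[n] (fun y => Psi L i z * delta L z y) 0 :=
            Finset.sum_congr rfl fun z _ => (hsm z).symm
        _ = (TT p L)^[n] (fun y => ∑ z ∈ F, Psi L i z * delta L z y) 0 := hs.symm
        _ = (TT p L)^[n] (GG L i M) 0 := by
            rw [show (fun y => ∑ z ∈ F, Psi L i z * delta L z y) = GG L i M from
              funext fun y => GG_sum_eq L i M y]
    have h3 : (TT p L)^[n] (GG L i M) 0
        = 2 * p i * SS p L n - (TT p L)^[n] (RR L i M) 0 := by
      have hring : (fun y => GG L i M y + RR L i M y) = Psi L i := by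
        funext y; unfold RR; ring
      have hadd := congrFun (iter_add p L (GG L i M) (RR L i M) n) 0
      rw [hring, Psi_eq_iter p L hp hsum hL0 i n] at hadd
      linarith [hadd]
    rw [h1, ← Finset.sum_mul, h2, h3]
    ring
  have hr0 : ∀ n, 0 ≤ (TT p L)^[n] (RR L i M) 0 := fun n =>
    iter_nonneg p L hp (RR_nonneg L hL0 i M) n 0
  have hr1 : ∀ n, (TT p L)^[n] (RR L i M) 0 ≤ L^2 * II p L n := fun n =>
    iter_RR_bound p L hp hL0 i hM n 0 (znorm_zero_le L hL0)
  have hII : Tendsto (fun n => L^2 * II p L n) atTop (𝓝 0) := by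
    have := (II_tendsto p L hp hsum hL0).const_mul (L^2)
    simpa using this
  have hr_tend : Tendsto (fun n => (TT p L)^[n] (RR L i M) 0) atTop (𝓝 0) :=
    tendsto_of_tendsto_of_tendsto_of_le_of_le tendsto_const_nhds hII hr0 hr1
  have h_tend_a2 : Tendsto a atTop (𝓝 ((1/L^2) * (2 * p i * slim p L - 0))) := by
    rw [funext h_an]
    exact (((SS_tendsto p L hp hsum hL0).const_mul (2 * p i)).sub hr_tend).const_mul (1/L^2)
  have hE : ∑ z ∈ F, exitProb p L 0 z * ((z i:ℝ)/L)^2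
      = (1/L^2) * (2 * p i * slim p L - 0) :=
    tendsto_nhds_unique h_tend_a h_tend_a2
  rw [htsum, hE]
  have hps : L^2 ≤ slim p L := slim_ge p L hp hsum hL0
  have hps2 : slim p L ≤ (L+1)^2 := slim_le p L hp hsum hL0
  have hpi2 : p i ≤ 1/2 := by
    have h := Finset.single_le_sum (f := fun j => 2 * p j)
      (fun j _ => mul_nonneg (by norm_num) (hp j)) (Finset.mem_univ i)
    rw [hsum] at h
    have h' : 2 * p i ≤ 1 := h
    linarith
  have hval : p i - (1/2)*((1/L^2)*(2 * p i * slim p L - 0))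
      = p i * (L^2 - slim p L)/L^2 := by
    field_simp
    ring
  rw [hval]
  have hnonpos : p i * (L^2 - slim p L)/L^2 ≤ 0 := by
    apply div_nonpos_of_nonpos_of_nonneg _ (le_of_lt hL2)
    exact mul_nonpos_of_nonneg_of_nonpos (hp i) (by linarith)
  rw [abs_of_nonpos hnonpos]
  have heq2 : -(p i * (L^2 - slim p L)/L^2) = p i * (slim p L - L^2)/L^2 := by ring
  rw [heq2, div_le_div_iff₀ hL2 hLpos]
  nlinarith [hp i, mul_nonneg (hp i) (sub_nonneg.mpr hps),
    mul_le_mul_of_nonneg_right (sub_le_sub_right hps2 (L^2)) (hp i),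
    mul_nonneg (sub_nonneg.mpr hpi2) (sub_nonneg.mpr hps)]
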